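/- Let f : ℝⁿ → ℝ be a nonconstant polynomial with n ≥ 2 and define 𝒫(x) = Σ_{α ∈ Γ(f) ∩ ℤ₊ⁿ} |x^α|. If f_Δ > 0 on (ℝ\{0})ⁿ for every Δ ∈ Γ_∞(f), then there exist constants c₁, c₂, R > 0 such that c₁𝒫(x) ≤ f(x) ≤ c₂𝒫(x) for all x with ‖x‖ > R. -/

import Mathlib

open MvPolynomial Set Asymptotics Filter

/-- The exponent vector of a monomial, viewed in `ℝⁿ`. -/
noncomputable def expR {n : ℕ} (α : Fin n →₀ ℕ) : Fin n → ℝ := fun i => (α i : ℝ)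

/-- The Newton polyhedron (at infinity) of a polynomial: the convex hull of its exponents. -/
noncomputable def Newton {n : ℕ} (f : MvPolynomial (Fin n) ℝ) : Set (Fin n → ℝ) :=
  convexHull ℝ (expR '' (f.support : Set (Fin n →₀ ℕ)))

/-- `d(q, Γ(f))`: the minimal value of `⟨q, ·⟩` on the Newton polyhedron. -/
noncomputable def dMin {n : ℕ} (q : Fin n → ℝ) (f : MvPolynomial (Fin n) ℝ) : ℝ :=
  sInf ((fun α : Fin n → ℝ => ∑ i, q i * α i) '' Newton f)

/-- `Δ(q, Γ(f))`: the face of the Newton polyhedron where `⟨q, ·⟩` attains its minimum. -/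
noncomputable def face {n : ℕ} (q : Fin n → ℝ) (f : MvPolynomial (Fin n) ℝ) : Set (Fin n → ℝ) :=
  {α ∈ Newton f | ∑ i, q i * α i = dMin q f}

/-- The Newton boundary at infinity: faces `Δ(q, Γ(f))` with `min_j q_j < 0`. -/
noncomputable def NewtonBoundary {n : ℕ} (f : MvPolynomial (Fin n) ℝ) : Set (Set (Fin n → ℝ)) :=
  {Δ | ∃ q : Fin n → ℝ, (∃ j, q j < 0) ∧ Δ = face q f}

open Classical in
/-- The truncation `f_Δ` of `f` to a face `Δ`. -/
noncomputable def trunc {n : ℕ} (f : MvPolynomial (Fin n) ℝ) (Δ : Set (Fin n → ℝ)) :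
    MvPolynomial (Fin n) ℝ :=
  ∑ α ∈ f.support.filter (fun α => expR α ∈ Δ), monomial α (f.coeff α)

/-- `𝒫(x) = Σ_{α ∈ Γ(f) ∩ ℤ₊ⁿ} |x^α|`. -/
noncomputable def P {n : ℕ} (f : MvPolynomial (Fin n) ℝ) (x : Fin n → ℝ) : ℝ :=
  ∑' α : {α : Fin n →₀ ℕ // expR α ∈ Newton f}, |∏ i, x i ^ ((α : Fin n →₀ ℕ) i)|

/-- Non-degeneracy at infinity. -/
def Nondeg {n : ℕ} (f : MvPolynomial (Fin n) ℝ) : Prop :=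
  ∀ Δ ∈ NewtonBoundary f, ¬ ∃ x : Fin n → ℝ, (∀ i, x i ≠ 0) ∧
    eval x (trunc f Δ) = 0 ∧ ∀ i, eval x (pderiv i (trunc f Δ)) = 0

/-- The norm of a polynomial: the maximum of the absolute values of its coefficients. -/
noncomputable def polyNorm {n : ℕ} (f : MvPolynomial (Fin n) ℝ) : ℝ :=
  ⨆ α ∈ f.support, |f.coeff α|

/-- Stable compactness of the zero set of `f`. -/
def StablyCompact {n : ℕ} (f : MvPolynomial (Fin n) ℝ) : Prop :=
  ∃ ε > 0, ∀ g : MvPolynomial (Fin n) ℝ, Newton g ⊆ Newton f → polyNorm g < ε →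
    IsCompact {x : Fin n → ℝ | eval x (f + g) = 0}

/-!
Every monomial of `f` is a term of `𝒫`, which gives the upper bound. Conversely `𝒫` is
comparable to the largest monomial `|x^α|` with `α` in the support of `f`: by weighted AM–GM,
`|x^β| ≤ max_α |x^α|` for every `β` in the Newton polyhedron.

If the lower bound failed, there would be points `x_k → ∞` with `f(x_k) = o(𝒫(x_k))`. In place
of the curve selection lemma we pass to an ultrafilter on the indices, along which a dominant
monomial `x^αs` can be fixed and all ratios `x_k^α / x_k^αs` converge, to limits `T α`. In the
logarithmic coordinates `log |x_k|`, the exponents with `T α ≠ 0` stay at bounded distance from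
`αs` while the others, and one coordinate direction, run off to infinity; separating the two
gives a weight `q` with a negative entry whose face contains exactly the exponents with
`T α ≠ 0`. A point `y` of the torus with `y^α = T α · y^αs` on that face then gives
`f_Δ(y) = y^αs ∑ a_α T α`, which has the sign of `lim f(x_k) / |x_k^αs| ≤ 0`.
-/

open scoped Topology

/-- The vectors on which the `φ k` converge form a closed subspace `V`, disjoint from the convex
hull of `G`, on which the `φ k` tend to `+∞`. A functional separating the two is bounded below on
`V`, hence vanishes there. -/
theorem exists_dual_pos_of_tendsto_atTop {ι E : Type*} [NormedAddCommGroup E]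
    [NormedSpace ℝ E] [FiniteDimensional ℝ E] {l : Filter ι} [l.NeBot] (φ : ι → E →ₗ[ℝ] ℝ)
    (G : Finset E) (hG : ∀ g ∈ G, Tendsto (fun k => φ k g) l atTop) :
    ∃ ℓ : StrongDual ℝ E, (∀ u, (∃ c, Tendsto (fun k => φ k u) l (𝓝 c)) → ℓ u = 0) ∧
      ∀ g ∈ G, 0 < ℓ g := by
  let V : Submodule ℝ E :=
    { carrier := {u | ∃ c, Tendsto (fun k => φ k u) l (𝓝 c)}
      add_mem' := fun ⟨a, ha⟩ ⟨b, hb⟩ => ⟨a + b, by simpa only [map_add] using ha.add hb⟩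
      zero_mem' := ⟨0, by simpa only [map_zero] using tendsto_const_nhds⟩
      smul_mem' := fun r _ ⟨a, ha⟩ =>
        ⟨r * a, by simpa only [map_smul, smul_eq_mul] using ha.const_mul r⟩ }
  have hdiv : convexHull ℝ (G : Set E) ⊆ {p | Tendsto (fun k => φ k p) l atTop} := by
    refine convexHull_min (fun g hg => hG g hg) ?_
    intro a ha b hb s t hs ht hst
    refine tendsto_atTop.2 fun C => ?_
    filter_upwards [ha.eventually_ge_atTop C, hb.eventually_ge_atTop C] with k hak hbk
    calc C = s * C + t * C := by rw [← add_mul, hst, one_mul]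
      _ ≤ s * φ k a + t * φ k b := by gcongr
      _ = φ k (s • a + t • b) := by simp only [map_add, map_smul, smul_eq_mul]
  have hdisj : Disjoint (convexHull ℝ (G : Set E)) V := by
    refine Set.disjoint_left.2 fun p hpG ⟨c, hc⟩ => ?_
    exact not_tendsto_atTop_of_tendsto_nhds hc (hdiv hpG)
  obtain ⟨f, u, v, hfG, huv, hfV⟩ :=
    geometric_hahn_banach_compact_closed (convex_convexHull ℝ _)
      (G.finite_toSet.isCompact_convexHull (𝕜 := ℝ)) V.convex
      V.closed_of_finiteDimensional hdisj
  have hfV0 : ∀ b ∈ V, f b = 0 := by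
    intro b hb
    by_contra hne
    have := hfV (((v - 1) / f b) • b) (V.smul_mem _ hb)
    rw [map_smul, smul_eq_mul, div_mul_cancel₀ _ hne] at this
    linarith
  have hv : v < 0 := by simpa using hfV 0 V.zero_mem
  refine ⟨-f, fun u hu => by simp [hfV0 u hu], fun g hg => ?_⟩
  have := hfG g (subset_convexHull ℝ _ hg)
  simp only [neg_apply]
  linarith

theorem exists_forall_apply_eq_of_tendsto {ι J E : Type*} [Finite J] [AddCommGroup E]
    [Module ℝ E] {l : Filter ι} [l.NeBot] (ψ : J → E →ₗ[ℝ] ℝ) (w : ι → E) (b : J → ℝ)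
    (h : ∀ j, Tendsto (fun k => ψ j (w k)) l (𝓝 (b j))) : ∃ v, ∀ j, ψ j v = b j := by
  let A := LinearMap.pi ψ
  have hb : b ∈ LinearMap.range A :=
    (LinearMap.range A).closed_of_finiteDimensional.mem_of_tendsto (tendsto_pi_nhds.2 h)
      (Eventually.of_forall fun k => ⟨w k, rfl⟩)
  obtain ⟨v, hv⟩ := hb
  exact ⟨v, fun j => congrFun hv j⟩

noncomputable def mpow {n : ℕ} (x : Fin n → ℝ) (α : Fin n →₀ ℕ) : ℝ := ∏ i, x i ^ α i

section NewtonPolyhedron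

variable {n : ℕ}

theorem expR_mem_newton {f : MvPolynomial (Fin n) ℝ} {α : Fin n →₀ ℕ} (hα : α ∈ f.support) :
    expR α ∈ Newton f :=
  subset_convexHull ℝ _ (Set.mem_image_of_mem _ hα)

theorem newton_subset_box (f : MvPolynomial (Fin n) ℝ) :
    Newton f ⊆ Set.Icc 0 (fun _ => (f.totalDegree : ℝ)) := by
  refine convexHull_min ?_ (convex_Icc _ _)
  rintro _ ⟨α, hα, rfl⟩
  refine ⟨fun i => Nat.cast_nonneg _, fun i => ?_⟩
  have : α i ≤ f.totalDegree := (Finsupp.le_degree i α).trans (le_totalDegree hα)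
  simpa [expR] using this

theorem finite_setOf_expR_mem_newton (f : MvPolynomial (Fin n) ℝ) :
    {α : Fin n →₀ ℕ | expR α ∈ Newton f}.Finite := by
  refine Set.Finite.of_finite_image ?_ DFunLike.coe_injective.injOn
  refine (Set.finite_Iic (fun _ : Fin n => f.totalDegree)).subset ?_
  rintro _ ⟨α, hα, rfl⟩ i
  simpa [expR] using (newton_subset_box f hα).2 i

noncomputable instance (f : MvPolynomial (Fin n) ℝ) :
    Fintype {α : Fin n →₀ ℕ // expR α ∈ Newton f} :=
  (finite_setOf_expR_mem_newton f).fintype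

theorem P_eq_sum (f : MvPolynomial (Fin n) ℝ) (x : Fin n → ℝ) :
    P f x = ∑ α : {α : Fin n →₀ ℕ // expR α ∈ Newton f}, |mpow x α| :=
  tsum_fintype _

theorem abs_mpow_le_P (f : MvPolynomial (Fin n) ℝ) (x : Fin n → ℝ) {α : Fin n →₀ ℕ}
    (hα : expR α ∈ Newton f) : |mpow x α| ≤ P f x := by
  rw [P_eq_sum]
  exact Finset.single_le_sum (f := fun β : {α // expR α ∈ Newton f} => |mpow x β|)
    (fun _ _ => abs_nonneg _) (Finset.mem_univ ⟨α, hα⟩)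

theorem abs_mpow_eq_prod_rpow (x : Fin n → ℝ) (α : Fin n →₀ ℕ) :
    |mpow x α| = ∏ i, |x i| ^ expR α i := by
  simp only [mpow, Finset.abs_prod, abs_pow, expR, Real.rpow_natCast]

/-- Weighted AM–GM makes the sublevel sets of `p ↦ ∏ |xᵢ|^pᵢ` in the orthant convex. -/
theorem abs_mpow_le_of_mem_convexHull (x : Fin n → ℝ) {S : Set (Fin n →₀ ℕ)} {M : ℝ}
    (hM : ∀ α ∈ S, |mpow x α| ≤ M) {β : Fin n →₀ ℕ}
    (hβ : expR β ∈ convexHull ℝ (expR '' S)) : |mpow x β| ≤ M := by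
  let C : Set (Fin n → ℝ) := {p | 0 ≤ p ∧ ∏ i, |x i| ^ p i ≤ M}
  have hC : Convex ℝ C := by
    rintro a ⟨ha0, haM⟩ b ⟨hb0, hbM⟩ s t hs ht hst
    refine ⟨add_nonneg (smul_nonneg hs ha0) (smul_nonneg ht hb0), ?_⟩
    have hsplit : ∀ i, |x i| ^ (s • a + t • b) i = (|x i| ^ a i) ^ s * (|x i| ^ b i) ^ t :=
      fun i => by
        simp only [Pi.add_apply, Pi.smul_apply, smul_eq_mul]
        rw [Real.rpow_add_of_nonneg (abs_nonneg _) (mul_nonneg hs (ha0 i))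
          (mul_nonneg ht (hb0 i)), mul_comm s, mul_comm t,
          Real.rpow_mul (abs_nonneg _), Real.rpow_mul (abs_nonneg _)]
    have hnn : ∀ (p : Fin n → ℝ) (i : Fin n), 0 ≤ |x i| ^ p i := fun p i =>
      Real.rpow_nonneg (abs_nonneg _) _
    simp only [hsplit, Finset.prod_mul_distrib]
    rw [Real.finsetProd_rpow _ _ fun i _ => hnn a i,
      Real.finsetProd_rpow _ _ fun i _ => hnn b i]
    calc (∏ i, |x i| ^ a i) ^ s * (∏ i, |x i| ^ b i) ^ t
        ≤ s * ∏ i, |x i| ^ a i + t * ∏ i, |x i| ^ b i :=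
          Real.geom_mean_le_arith_mean2_weighted hs ht (Finset.prod_nonneg fun i _ => hnn a i)
            (Finset.prod_nonneg fun i _ => hnn b i) hst
      _ ≤ s * M + t * M := by gcongr
      _ = M := by rw [← add_mul, hst, one_mul]
  have hSC : expR '' S ⊆ C := by
    rintro _ ⟨α, hα, rfl⟩
    exact ⟨fun i => Nat.cast_nonneg _, abs_mpow_eq_prod_rpow x α ▸ hM α hα⟩
  rw [abs_mpow_eq_prod_rpow]
  exact (convexHull_min hSC hC hβ).2

theorem P_nonneg (f : MvPolynomial (Fin n) ℝ) (x : Fin n → ℝ) : 0 ≤ P f x :=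
  tsum_nonneg fun _ => abs_nonneg _

theorem P_le_card_mul (f : MvPolynomial (Fin n) ℝ) (x : Fin n → ℝ) {M : ℝ}
    (hM : ∀ α ∈ f.support, |mpow x α| ≤ M) :
    P f x ≤ Fintype.card {α : Fin n →₀ ℕ // expR α ∈ Newton f} * M := by
  rw [P_eq_sum, ← nsmul_eq_mul, ← Finset.card_univ]
  exact Finset.sum_le_card_nsmul _ _ _ fun α _ => abs_mpow_le_of_mem_convexHull x hM α.2

theorem eval_eq_sum_mpow (f : MvPolynomial (Fin n) ℝ) (x : Fin n → ℝ) :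
    eval x f = ∑ α ∈ f.support, f.coeff α * mpow x α :=
  eval_eq' x f

theorem eval_le_mul_P (f : MvPolynomial (Fin n) ℝ) (x : Fin n → ℝ) :
    eval x f ≤ (∑ α ∈ f.support, |f.coeff α|) * P f x := by
  rw [eval_eq_sum_mpow, Finset.sum_mul]
  refine Finset.sum_le_sum fun α hα => ?_
  calc f.coeff α * mpow x α ≤ |f.coeff α| * |mpow x α| :=
        (le_abs_self _).trans (abs_mul _ _).le
    _ ≤ |f.coeff α| * P f x := by gcongr; exact abs_mpow_le_P f x (expR_mem_newton hα)

end NewtonPolyhedron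

section Monomials

variable {n : ℕ} {α αs : Fin n →₀ ℕ}

-- `Real.log` is `log |·|` with `log 0 = 0`: this needs no sign condition on the entries of `x`.
theorem log_mpow {x : Fin n → ℝ} (hx : mpow x α ≠ 0) :
    Real.log (mpow x α) = (Real.log ∘ x) ⬝ᵥ expR α := by
  rw [mpow, Real.log_prod fun i _ => Finset.prod_ne_zero_iff.1 hx i (Finset.mem_univ i)]
  simp only [Real.log_pow, dotProduct, Function.comp_apply, expR, mul_comm]

theorem log_dotProduct_sub {z : Fin n → ℝ} (hα : mpow z α ≠ 0) (hαs : mpow z αs ≠ 0) :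
    (Real.log ∘ z) ⬝ᵥ (expR α - expR αs) = Real.log (mpow z α / mpow z αs) := by
  rw [dotProduct_sub, ← log_mpow hα, ← log_mpow hαs, Real.log_div hα hαs]

theorem mpow_sign_mul_exp {z : Fin n → ℝ} (hz : mpow z α ≠ 0) (v : Fin n → ℝ) :
    mpow (fun i => (if z i < 0 then -1 else 1) * Real.exp (v i)) α =
      mpow z α / |mpow z α| * Real.exp (v ⬝ᵥ expR α) := by
  have hsign : ∀ i, (if z i < 0 then (-1 : ℝ) else 1) ^ α i = (z i / |z i|) ^ α i := by
    intro i
    rcases Nat.eq_zero_or_pos (α i) with h0 | hpos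
    · simp [h0]
    have hzi : z i ≠ 0 := fun h =>
      hz (Finset.prod_eq_zero (Finset.mem_univ i) (by simp [h, hpos.ne']))
    rcases hzi.lt_or_gt with hneg | hpos'
    · rw [if_pos hneg, abs_of_neg hneg, div_neg, div_self hzi]
    · rw [if_neg hpos'.not_gt, abs_of_pos hpos', div_self hzi]
  simp only [mpow, mul_pow, Finset.prod_mul_distrib, hsign, div_pow, Finset.prod_div_distrib,
    Finset.abs_prod, abs_pow, ← Real.exp_nat_mul, ← Real.exp_sum, dotProduct, expR, mul_comm]

theorem div_abs_mul_abs_eq {a b t : ℝ} (h : 0 < a / b * t) :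
    a / |a| * |t| = t * (b / |b|) := by
  have hb : b ≠ 0 := by rintro rfl; simp at h
  have hprod : 0 < a * b * t := by
    have := mul_pos h (mul_self_pos.2 hb)
    rwa [show a / b * t * (b * b) = a * b * t by field_simp] at this
  have ha : a ≠ 0 := by rintro rfl; simp at hprod
  rcases ha.lt_or_gt with ha | ha <;> rcases hb.lt_or_gt with hb | hb
  · have ht := (pos_iff_pos_of_mul_pos hprod).1 (mul_pos_of_neg_of_neg ha hb)
    simp [abs_of_neg ha, abs_of_neg hb, abs_of_pos ht, ha.ne, hb.ne]
  · have ht := (neg_iff_neg_of_mul_pos hprod).1 (mul_neg_of_neg_of_pos ha hb)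
    simp [abs_of_neg ha, abs_of_pos hb, abs_of_neg ht, ha.ne, hb.ne']
  · have ht := (neg_iff_neg_of_mul_pos hprod).1 (mul_neg_of_pos_of_neg ha hb)
    simp [abs_of_pos ha, abs_of_neg hb, abs_of_neg ht, ha.ne', hb.ne]
  · have ht := (pos_iff_pos_of_mul_pos hprod).1 (mul_pos ha hb)
    simp [abs_of_pos ha, abs_of_pos hb, abs_of_pos ht, ha.ne', hb.ne']

/-- The signs of `y` are copied from `z` and its moduli are `exp v`; the sign condition `hzT`
makes the moduli prescribed by `hv` come with the right signs. -/
theorem exists_mpow_eq_mul {z v : Fin n → ℝ} {M : Finset (Fin n →₀ ℕ)}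
    {T : (Fin n →₀ ℕ) → ℝ} (hz : mpow z αs ≠ 0)
    (hv : ∀ α ∈ M, v ⬝ᵥ (expR α - expR αs) = Real.log (T α))
    (hzT : ∀ α ∈ M, 0 < mpow z α / mpow z αs * T α) :
    ∃ y : Fin n → ℝ, (∀ i, y i ≠ 0) ∧ (∀ α ∈ M, mpow y α = T α * mpow y αs) ∧
      0 < mpow y αs * mpow z αs := by
  refine ⟨fun i => (if z i < 0 then -1 else 1) * Real.exp (v i), fun i => ?_, fun α hα => ?_,
    ?_⟩
  · exact mul_ne_zero (by split_ifs <;> norm_num) (Real.exp_ne_zero _)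
  · have hzα : mpow z α ≠ 0 := by
      rintro h
      simpa [h] using hzT α hα
    have hTα : T α ≠ 0 := by
      rintro h
      simpa [h] using hzT α hα
    have hexp : Real.exp (v ⬝ᵥ expR α) = |T α| * Real.exp (v ⬝ᵥ expR αs) := by
      rw [← Real.exp_log (abs_pos.2 hTα), Real.log_abs, ← hv α hα, ← Real.exp_add,
        dotProduct_sub, sub_add_cancel]
    rw [mpow_sign_mul_exp hzα, mpow_sign_mul_exp hz, hexp, ← mul_assoc,
      div_abs_mul_abs_eq (hzT α hα), mul_assoc]
  · rw [mpow_sign_mul_exp hz, mul_right_comm, div_mul_eq_mul_div, ← sq]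
    have := abs_pos.2 hz
    positivity

end Monomials

section Faces

variable {n : ℕ} {f : MvPolynomial (Fin n) ℝ} {q : Fin n → ℝ} {α αs : Fin n →₀ ℕ}

open Classical in
theorem eval_trunc (y : Fin n → ℝ) (Δ : Set (Fin n → ℝ)) :
    eval y (trunc f Δ) =
      ∑ α ∈ f.support, if expR α ∈ Δ then f.coeff α * mpow y α else 0 := by
  simp only [trunc, Finset.sum_filter, map_sum]
  refine Finset.sum_congr rfl fun α _ => ?_
  split_ifs
  · rw [eval_monomial, Finsupp.prod_pow]
    rfl
  · exact map_zero _

theorem dMin_eq_of_forall_le (hαs : αs ∈ f.support)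
    (hmin : ∀ α ∈ f.support, q ⬝ᵥ expR αs ≤ q ⬝ᵥ expR α) : dMin q f = q ⬝ᵥ expR αs := by
  refine IsLeast.csInf_eq ⟨⟨expR αs, expR_mem_newton hαs, rfl⟩, ?_⟩
  rintro _ ⟨p, hp, rfl⟩
  refine convexHull_min ?_ (convex_halfSpace_ge (dotProductEquiv ℝ (Fin n) q).isLinear _) hp
  rintro _ ⟨α, hα, rfl⟩
  exact hmin α hα

theorem expR_mem_face_iff (hαs : αs ∈ f.support)
    (hmin : ∀ α ∈ f.support, q ⬝ᵥ expR αs ≤ q ⬝ᵥ expR α) (hα : α ∈ f.support) :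
    expR α ∈ face q f ↔ q ⬝ᵥ expR α = q ⬝ᵥ expR αs := by
  rw [face, Set.mem_ofPred_eq, dMin_eq_of_forall_le hαs hmin]
  exact and_iff_right (expR_mem_newton hα)

theorem expR_mem_face_iff_of_forall {p : (Fin n →₀ ℕ) → Prop} (hαs : αs ∈ f.support)
    (hq : ∀ α ∈ f.support, (p α → q ⬝ᵥ expR α = q ⬝ᵥ expR αs) ∧
      (¬p α → q ⬝ᵥ expR αs < q ⬝ᵥ expR α))
    (hα : α ∈ f.support) : expR α ∈ face q f ↔ p α := by
  have hmin : ∀ α ∈ f.support, q ⬝ᵥ expR αs ≤ q ⬝ᵥ expR α := fun α hα => by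
    by_cases h : p α
    · exact ((hq α hα).1 h).ge
    · exact ((hq α hα).2 h).le
  rw [expR_mem_face_iff hαs hmin hα]
  exact ⟨fun heq => not_not.1 fun hp => ((hq α hα).2 hp).ne heq.symm, (hq α hα).1⟩

theorem exists_weight_add_lt (q₀ : Fin n → ℝ) (Z : Set (Fin n)) (S : Finset (Fin n →₀ ℕ))
    (hαs : ∀ i ∈ Z, αs i = 0) :
    ∃ q : Fin n → ℝ, (∀ i ∉ Z, q i = q₀ i) ∧
      (∀ α : Fin n →₀ ℕ, (∀ i ∈ Z, α i = 0) → q ⬝ᵥ expR α = q₀ ⬝ᵥ expR α) ∧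
      ∀ α ∈ S, (∃ i ∈ Z, α i ≠ 0) → q ⬝ᵥ expR αs < q ⬝ᵥ expR α := by
  classical
  let ζ : Fin n → ℝ := fun i => if i ∈ Z then 1 else 0
  let N := ∑ α ∈ S, |q₀ ⬝ᵥ expR αs - q₀ ⬝ᵥ expR α| + 1
  have hN : 0 ≤ N := by positivity
  have hζ : ∀ α : Fin n →₀ ℕ, (∀ i ∈ Z, α i = 0) → ζ ⬝ᵥ expR α = 0 := fun α hα =>
    Finset.sum_eq_zero fun i _ => by by_cases hi : i ∈ Z <;> simp [ζ, expR, hi, hα]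
  have hq : ∀ α, (q₀ + N • ζ) ⬝ᵥ expR α = q₀ ⬝ᵥ expR α + N * ζ ⬝ᵥ expR α := fun α => by
    rw [add_dotProduct, smul_dotProduct, smul_eq_mul]
  refine ⟨q₀ + N • ζ, fun i hi => by simp [ζ, hi],
    fun α hα => by rw [hq, hζ α hα, mul_zero, add_zero], fun α hα ⟨i, hiZ, hαi⟩ => ?_⟩
  have h1 : 1 ≤ ζ ⬝ᵥ expR α := by
    calc (1 : ℝ) ≤ ζ i * expR α i := by
          simpa [ζ, hiZ, expR, Nat.one_le_iff_ne_zero] using hαi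
      _ ≤ ζ ⬝ᵥ expR α := Finset.single_le_sum (f := fun j => ζ j * expR α j)
          (fun j _ => mul_nonneg (by positivity) (Nat.cast_nonneg _)) (Finset.mem_univ i)
  have h2 := Finset.single_le_sum (f := fun β => |q₀ ⬝ᵥ expR αs - q₀ ⬝ᵥ expR β|)
    (fun _ _ => abs_nonneg _) hα
  rw [hq, hq, hζ αs hαs, mul_zero, add_zero]
  nlinarith [le_abs_self (q₀ ⬝ᵥ expR αs - q₀ ⬝ᵥ expR α)]

end Faces

section Ultrafilter

variable {n : ℕ} {ι : Type*} {U : Ultrafilter ι} {x : ι → Fin n → ℝ}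
  {α αs : Fin n →₀ ℕ} {T : (Fin n →₀ ℕ) → ℝ} {f : MvPolynomial (Fin n) ℝ}

theorem exists_tendsto_abs_atTop (hx : Tendsto (fun k => ‖x k‖) U atTop) :
    ∃ i, Tendsto (fun k => |x k i|) U atTop := by
  have : ∀ᶠ k in U, ∃ i, ‖x k‖ ≤ |x k i| := by
    filter_upwards [hx.eventually_gt_atTop 0] with k hk
    by_contra! h
    exact lt_irrefl _ ((pi_norm_lt_iff hk).2 fun i => (Real.norm_eq_abs _).trans_lt (h i))
  obtain ⟨i, hi⟩ := Ultrafilter.eventually_exists_iff.1 this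
  exact ⟨i, tendsto_atTop_mono' _ hi hx⟩

theorem exists_tendsto_of_eventually_abs_le {u : ι → ℝ} {C : ℝ}
    (h : ∀ᶠ k in U, |u k| ≤ C) : ∃ τ, Tendsto u U (𝓝 τ) := by
  obtain ⟨τ, -, hτ⟩ := (isCompact_Icc (a := -C) (b := C)).ultrafilter_le_nhds (U.map u)
    (le_principal_iff.2 (h.mono fun k hk => abs_le.1 hk))
  exact ⟨τ, hτ⟩

theorem tendsto_log_dotProduct_sub {τ : ℝ} (hαs : ∀ᶠ k in U, mpow (x k) αs ≠ 0)
    (hτ : Tendsto (fun k => mpow (x k) α / mpow (x k) αs) U (𝓝 τ)) (hτ0 : τ ≠ 0) :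
    Tendsto (fun k => (Real.log ∘ x k) ⬝ᵥ (expR α - expR αs)) U (𝓝 (Real.log τ)) := by
  refine ((Real.continuousAt_log hτ0).tendsto.comp hτ).congr' ?_
  filter_upwards [hτ.eventually_ne hτ0, hαs] with k hk hk'
  rw [Function.comp_apply, log_dotProduct_sub (div_ne_zero_iff.1 hk).1 hk']

theorem tendsto_log_dotProduct_sub_atTop (hα : ∀ᶠ k in U, mpow (x k) α ≠ 0)
    (hαs : ∀ᶠ k in U, mpow (x k) αs ≠ 0)
    (hτ : Tendsto (fun k => mpow (x k) α / mpow (x k) αs) U (𝓝 0)) :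
    Tendsto (fun k => (Real.log ∘ x k) ⬝ᵥ (expR αs - expR α)) U atTop := by
  have hne : ∀ᶠ k in U, mpow (x k) α / mpow (x k) αs ∈ ({0}ᶜ : Set ℝ) := by
    filter_upwards [hα, hαs] with k hk hk'
    exact div_ne_zero hk hk'
  refine (tendsto_neg_atBot_atTop.comp (Real.tendsto_log_nhdsNE_zero.comp
    (tendsto_nhdsWithin_iff.2 ⟨hτ, hne⟩))).congr' ?_
  filter_upwards [hα, hαs] with k hk hk'
  rw [Function.comp_apply, Function.comp_apply, ← log_dotProduct_sub hk hk', ← dotProduct_neg,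
    neg_sub]

theorem eventually_mul_nonpos_of_tendsto {u b : ι → ℝ} {L : ℝ} (hu : Tendsto u U (𝓝 L))
    (h : ∀ c > 0, ∀ᶠ k in U, b k * u k ≤ c * |b k|) : ∀ᶠ k in U, b k * L ≤ 0 := by
  by_contra hcon
  rw [← Ultrafilter.eventually_not] at hcon
  have hL : 0 < |L| / 2 := by
    obtain ⟨k, hk⟩ := hcon.exists
    exact half_pos (abs_pos.2 fun h => hk (by simp [h]))
  obtain ⟨k, hk, hbu, huL⟩ :=
    (hcon.and ((h _ hL).and (hu.eventually (Metric.ball_mem_nhds L hL)))).exists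
  rw [not_le] at hk
  rw [Real.dist_eq] at huL
  have hbL : b k * L = |b k| * |L| := by rw [← abs_mul, abs_of_pos hk]
  have hclose : |b k * u k - b k * L| < |b k| * (|L| / 2) := by
    rw [← mul_sub, abs_mul]
    exact mul_lt_mul_of_pos_left huL (abs_pos.2 (left_ne_zero_of_mul hk.ne'))
  linarith [abs_lt.1 hclose]

theorem eventually_mpow_ne_zero_iff :
    (∀ᶠ k in U, mpow (x k) α ≠ 0) ↔ ∀ i, (∀ᶠ k in U, x k i = 0) → α i = 0 := by
  simp only [mpow, Finset.prod_ne_zero_iff, Finset.mem_univ, true_implies, ne_eq,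
    pow_eq_zero_iff', not_and_or, not_not, Filter.eventually_all]
  refine forall_congr' fun i => ?_
  rw [Ultrafilter.eventually_or, Ultrafilter.eventually_not, Filter.eventually_const,
    imp_iff_not_or, or_comm]

theorem exists_weight_of_eventually_ne_zero (S : Finset (Fin n →₀ ℕ))
    (hS : ∀ α ∈ S, ∀ᶠ k in U, mpow (x k) α ≠ 0) (hαs : ∀ᶠ k in U, mpow (x k) αs ≠ 0)
    (hT : ∀ α ∈ S, Tendsto (fun k => mpow (x k) α / mpow (x k) αs) U (𝓝 (T α)))
    {i₀ : Fin n} (hi₀ : Tendsto (fun k => |x k i₀|) U atTop) :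
    ∃ q : Fin n → ℝ, q i₀ < 0 ∧ ∀ α ∈ S,
      (T α ≠ 0 → q ⬝ᵥ expR α = q ⬝ᵥ expR αs) ∧ (T α = 0 → q ⬝ᵥ expR αs < q ⬝ᵥ expR α) := by
  classical
  let G : Finset (Fin n → ℝ) :=
    insert (Pi.single i₀ 1) ((S.filter (T · = 0)).image fun α => expR αs - expR α)
  have hG : ∀ g ∈ G, Tendsto (fun k => (Real.log ∘ x k) ⬝ᵥ g) U atTop := by
    intro g hg
    rcases Finset.mem_insert.1 hg with rfl | hg
    · refine (Real.tendsto_log_atTop.comp hi₀).congr fun k => ?_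
      simp [dotProduct_single]
    · obtain ⟨α, hα, rfl⟩ := Finset.mem_image.1 hg
      rw [Finset.mem_filter] at hα
      exact tendsto_log_dotProduct_sub_atTop (hS α hα.1) hαs (hα.2 ▸ hT α hα.1)
  obtain ⟨ℓ, hℓV, hℓG⟩ := exists_dual_pos_of_tendsto_atTop (l := (U : Filter ι))
    (fun k => dotProductEquiv ℝ (Fin n) (Real.log ∘ x k)) G hG
  set p := (dotProductEquiv ℝ (Fin n)).symm ℓ.toLinearMap
  have hp : ∀ u, ℓ u = p ⬝ᵥ u := fun u =>
    (LinearMap.congr_fun ((dotProductEquiv ℝ (Fin n)).apply_symm_apply ℓ.toLinearMap) u).symm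
  refine ⟨-p, ?_, fun α hα => ⟨fun hTα => ?_, fun hTα => ?_⟩⟩
  · have := hℓG _ (Finset.mem_insert_self _ _)
    rw [hp, dotProduct_single, mul_one] at this
    simpa using this
  · have := hℓV _ ⟨_, tendsto_log_dotProduct_sub hαs (hT α hα) hTα⟩
    rw [hp, dotProduct_sub] at this
    simp only [neg_dotProduct]
    linarith
  · have := hℓG (expR αs - expR α)
      (Finset.mem_insert_of_mem (Finset.mem_image_of_mem _ (Finset.mem_filter.2 ⟨hα, hTα⟩)))
    rw [hp, dotProduct_sub] at this
    simp only [neg_dotProduct]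
    linarith

/-- The coordinates `Z` that eventually vanish carry no logarithmic information; adding a large
multiple of their indicator to the weight pushes every exponent that involves them off the
face. -/
theorem exists_weight (S : Finset (Fin n →₀ ℕ)) (hx : Tendsto (fun k => ‖x k‖) U atTop)
    (hαs : ∀ᶠ k in U, mpow (x k) αs ≠ 0)
    (hT : ∀ α ∈ S, Tendsto (fun k => mpow (x k) α / mpow (x k) αs) U (𝓝 (T α))) :
    ∃ q : Fin n → ℝ, (∃ j, q j < 0) ∧ ∀ α ∈ S,
      (T α ≠ 0 → q ⬝ᵥ expR α = q ⬝ᵥ expR αs) ∧ (T α = 0 → q ⬝ᵥ expR αs < q ⬝ᵥ expR α) := by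
  classical
  obtain ⟨i₀, hi₀⟩ := exists_tendsto_abs_atTop hx
  let Z : Set (Fin n) := {i | ∀ᶠ k in U, x k i = 0}
  let S' := S.filter fun α => ∀ᶠ k in U, mpow (x k) α ≠ 0
  obtain ⟨q₀, hq₀, hq₀S'⟩ := exists_weight_of_eventually_ne_zero S'
    (fun α hα => (Finset.mem_filter.1 hα).2) hαs (fun α hα => hT α (Finset.mem_filter.1 hα).1)
    hi₀
  obtain ⟨q, hqZ, hqq₀, hqlt⟩ :=
    exists_weight_add_lt q₀ Z S (eventually_mpow_ne_zero_iff.1 hαs)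
  have hi₀Z : i₀ ∉ Z := fun h => by
    obtain ⟨k, hk0, hk1⟩ := (h.and (hi₀.eventually_ge_atTop 1)).exists
    norm_num [hk0] at hk1
  refine ⟨q, ⟨i₀, hqZ i₀ hi₀Z ▸ hq₀⟩, fun α hα => ?_⟩
  by_cases hα' : ∀ᶠ k in U, mpow (x k) α ≠ 0
  · rw [hqq₀ α (eventually_mpow_ne_zero_iff.1 hα'),
      hqq₀ αs (eventually_mpow_ne_zero_iff.1 hαs)]
    exact hq₀S' α (Finset.mem_filter.2 ⟨hα, hα'⟩)
  · have hT0 : T α = 0 := by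
      refine tendsto_nhds_unique (hT α hα) (tendsto_const_nhds.congr' ?_)
      filter_upwards [Ultrafilter.eventually_not.2 hα'] with k hk
      rw [not_not.1 hk, zero_div]
    have hZ : ∃ i ∈ Z, α i ≠ 0 := by
      by_contra! h
      exact hα' (eventually_mpow_ne_zero_iff.2 h)
    exact ⟨fun h => absurd hT0 h, fun _ => hqlt α hα hZ⟩

theorem exists_tendsto_mpow_div (S : Finset (Fin n →₀ ℕ))
    (hmax : ∀ᶠ k in U, ∀ α ∈ S, |mpow (x k) α| ≤ |mpow (x k) αs|)
    (hαs : ∀ᶠ k in U, mpow (x k) αs ≠ 0) :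
    ∃ T : (Fin n →₀ ℕ) → ℝ,
      ∀ α ∈ S, Tendsto (fun k => mpow (x k) α / mpow (x k) αs) U (𝓝 (T α)) := by
  refine ⟨fun α => limUnder (U : Filter ι) fun k => mpow (x k) α / mpow (x k) αs,
    fun α hα => tendsto_nhds_limUnder (exists_tendsto_of_eventually_abs_le (C := 1) ?_)⟩
  filter_upwards [hmax, hαs] with k hk hk'
  rw [abs_div, div_le_one (abs_pos.2 hk')]
  exact hk α hα

theorem exists_mpow_eq_mul_of_tendsto (M : Finset (Fin n →₀ ℕ))
    (hαs : ∀ᶠ k in U, mpow (x k) αs ≠ 0)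
    (hT : ∀ α ∈ M, Tendsto (fun k => mpow (x k) α / mpow (x k) αs) U (𝓝 (T α)))
    (hT0 : ∀ α ∈ M, T α ≠ 0) :
    ∃ y : Fin n → ℝ, (∀ i, y i ≠ 0) ∧ (∀ α ∈ M, mpow y α = T α * mpow y αs) ∧
      ∀ᶠ k in U, 0 < mpow y αs * mpow (x k) αs := by
  obtain ⟨v, hv⟩ := exists_forall_apply_eq_of_tendsto (l := (U : Filter ι))
    (fun α : M => dotProductEquiv ℝ (Fin n) (expR α.1 - expR αs)) (fun k => Real.log ∘ x k)
    (fun α => Real.log (T α.1)) fun α =>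
      (tendsto_log_dotProduct_sub hαs (hT α.1 α.2) (hT0 α.1 α.2)).congr fun k =>
        dotProduct_comm _ _
  have hsignT : ∀ α ∈ M, ∀ᶠ k in U, 0 < mpow (x k) α / mpow (x k) αs * T α := fun α hα =>
    ((hT α hα).mul_const (T α)).eventually (lt_mem_nhds (mul_self_pos.2 (hT0 α hα)))
  obtain ⟨σ, hσ⟩ : ∃ σ : ℝ, ∀ᶠ k in U, 0 < σ * mpow (x k) αs := by
    rcases Ultrafilter.eventually_or.1 (hαs.mono fun k hk => hk.lt_or_gt) with h | h
    · exact ⟨-1, h.mono fun k hk => by linarith⟩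
    · exact ⟨1, h.mono fun k hk => by linarith⟩
  obtain ⟨k₀, hk₀, hk₀σ, hk₀M⟩ :=
    (hαs.and (hσ.and ((Filter.eventually_all_finset M).2 hsignT))).exists
  obtain ⟨y, hy0, hyM, hyαs⟩ :=
    exists_mpow_eq_mul hk₀ (fun α hα => (dotProduct_comm _ _).trans (hv ⟨α, hα⟩)) hk₀M
  refine ⟨y, hy0, hyM, hσ.mono fun k hk => ?_⟩
  have hyσ : 0 < σ * mpow y αs := by nlinarith [sq_nonneg (mpow (x k₀) αs)]
  nlinarith [sq_nonneg σ]

theorem exists_dominant_monomial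
    (hfx : ∀ c > 0, ∀ᶠ k in U, eval (x k) f < c * P f (x k)) :
    ∃ αs ∈ f.support, (∀ᶠ k in U, ∀ α ∈ f.support, |mpow (x k) α| ≤ |mpow (x k) αs|) ∧
      (∀ᶠ k in U, mpow (x k) αs ≠ 0) ∧
      ∀ c > 0, ∀ᶠ k in U, eval (x k) f ≤ c * |mpow (x k) αs| := by
  set m : ℝ := (Fintype.card {α : Fin n →₀ ℕ // expR α ∈ Newton f} : ℝ)
  have hvanish : ∀ z, (∀ α ∈ f.support, |mpow z α| ≤ 0) → ¬eval z f < 1 * P f z := by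
    intro z hz hlt
    have hP := P_le_card_mul f z hz
    have heval : eval z f = 0 := by
      rw [eval_eq_sum_mpow]
      exact Finset.sum_eq_zero fun α hα => by rw [abs_nonpos_iff.1 (hz α hα), mul_zero]
    linarith
  have hargmax : ∀ᶠ k in U,
      ∃ αs ∈ f.support, ∀ α ∈ f.support, |mpow (x k) α| ≤ |mpow (x k) αs| := by
    filter_upwards [hfx 1 one_pos] with k hk
    rcases f.support.eq_empty_or_nonempty with h | h
    · exact absurd hk (hvanish _ (by simp [h]))
    · exact Finset.exists_max_image _ _ h
  obtain ⟨αs, hαs_mem, hmax⟩ :=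
    (Ultrafilter.eventually_exists_mem_iff f.support.finite_toSet).1 hargmax
  refine ⟨αs, hαs_mem, hmax, ?_, fun c hc => ?_⟩
  · filter_upwards [hmax, hfx 1 one_pos] with k hk hlt h0
    exact hvanish _ (by simpa [h0] using hk) hlt
  · have hm : 0 < m + 1 := by positivity
    filter_upwards [hmax, hfx (c / (m + 1)) (by positivity)] with k hk hlt
    have hP := P_le_card_mul f (x k) hk
    calc eval (x k) f ≤ c / (m + 1) * P f (x k) := hlt.le
      _ ≤ c / (m + 1) * ((m + 1) * |mpow (x k) αs|) := by
          gcongr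
          linarith [abs_nonneg (mpow (x k) αs)]
      _ = c * |mpow (x k) αs| := by rw [← mul_assoc, div_mul_cancel₀ _ hm.ne']

theorem exists_trunc_nonpos_of_dominant (hx : Tendsto (fun k => ‖x k‖) U atTop)
    (hαs_mem : αs ∈ f.support)
    (hmax : ∀ᶠ k in U, ∀ α ∈ f.support, |mpow (x k) α| ≤ |mpow (x k) αs|)
    (hαs : ∀ᶠ k in U, mpow (x k) αs ≠ 0)
    (hfx : ∀ c > 0, ∀ᶠ k in U, eval (x k) f ≤ c * |mpow (x k) αs|) :
    ∃ Δ ∈ NewtonBoundary f, ∃ y : Fin n → ℝ, (∀ i, y i ≠ 0) ∧ eval y (trunc f Δ) ≤ 0 := by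
  classical
  obtain ⟨T, hT⟩ := exists_tendsto_mpow_div f.support hmax hαs
  let L := ∑ α ∈ f.support, f.coeff α * T α
  have hL : Tendsto (fun k => eval (x k) f / mpow (x k) αs) U (𝓝 L) := by
    refine (tendsto_finsetSum f.support fun α hα => (hT α hα).const_mul (f.coeff α)).congr
      fun k => ?_
    simp only [eval_eq_sum_mpow, Finset.sum_div, mul_div_assoc]
  have hsign : ∀ᶠ k in U, mpow (x k) αs * L ≤ 0 := by
    refine eventually_mul_nonpos_of_tendsto hL fun c hc => ?_
    filter_upwards [hfx c hc, hαs] with k h1 h2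
    rwa [mul_div_cancel₀ _ h2]
  obtain ⟨q, hq, hqS⟩ := exists_weight f.support hx hαs hT
  let M := f.support.filter (T · ≠ 0)
  obtain ⟨y, hy0, hyM, hyαs⟩ := exists_mpow_eq_mul_of_tendsto M hαs
    (fun α hα => hT α (Finset.mem_filter.1 hα).1) (fun α hα => (Finset.mem_filter.1 hα).2)
  refine ⟨face q f, ⟨q, hq, rfl⟩, y, hy0, ?_⟩
  have heval : eval y (trunc f (face q f)) = mpow y αs * L := by
    rw [eval_trunc, Finset.mul_sum]
    refine Finset.sum_congr rfl fun α hα => ?_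
    rw [expR_mem_face_iff_of_forall (p := (T · ≠ 0)) hαs_mem
      (fun β hβ => ⟨(hqS β hβ).1, fun h => (hqS β hβ).2 (not_not.1 h)⟩) hα]
    split_ifs with hTα
    · rw [hyM α (Finset.mem_filter.2 ⟨hα, hTα⟩)]
      ring
    · rw [not_not.1 hTα, mul_zero, mul_zero]
  obtain ⟨k, hkL, hky⟩ := (hsign.and hyαs).exists
  rw [heval]
  by_contra! hpos
  nlinarith [mul_pos hpos hky, mul_nonpos_of_nonneg_of_nonpos (sq_nonneg (mpow y αs)) hkL]

end Ultrafilter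

theorem exists_lower_bound {n : ℕ} {f : MvPolynomial (Fin n) ℝ}
    (hpos : ∀ Δ ∈ NewtonBoundary f, ∀ x : Fin n → ℝ, (∀ i, x i ≠ 0) →
      0 < eval x (trunc f Δ)) :
    ∃ c₁ > (0 : ℝ), ∃ R > (0 : ℝ), ∀ x : Fin n → ℝ, R < ‖x‖ → c₁ * P f x ≤ eval x f := by
  by_contra! h
  choose x hxR hxf using fun k : ℕ => h (1 / (k + 1)) (by positivity) (k + 1) (by positivity)
  let U := Ultrafilter.of (atTop : Filter ℕ)
  have hx : Tendsto (fun k => ‖x k‖) U atTop :=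
    (tendsto_atTop_mono (fun k => (hxR k).le)
      (tendsto_atTop_add_const_right _ 1 tendsto_natCast_atTop_atTop)).mono_left
      (Ultrafilter.of_le _)
  have hfx : ∀ c > 0, ∀ᶠ k in U, eval (x k) f < c * P f (x k) := fun c hc =>
    Ultrafilter.of_le _ <| by
      filter_upwards [tendsto_one_div_add_atTop_nhds_zero_nat.eventually_lt_const hc] with k hk
      exact (hxf k).trans_le (mul_le_mul_of_nonneg_right hk.le (P_nonneg f (x k)))
  obtain ⟨αs, hαs_mem, hmax, hαs, hfx'⟩ := exists_dominant_monomial hfx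
  obtain ⟨Δ, hΔ, y, hy, hle⟩ := exists_trunc_nonpos_of_dominant hx hαs_mem hmax hαs hfx'
  exact (hpos Δ hΔ y hy).not_ge hle

theorem stmt8_general {n : ℕ} (f : MvPolynomial (Fin n) ℝ)
    (hpos : ∀ Δ ∈ NewtonBoundary f, ∀ x : Fin n → ℝ, (∀ i, x i ≠ 0) →
      0 < eval x (trunc f Δ)) :
    ∃ c₁ > (0 : ℝ), ∃ c₂ > (0 : ℝ), ∃ R > (0 : ℝ), ∀ x : Fin n → ℝ, R < ‖x‖ →
      c₁ * P f x ≤ eval x f ∧ eval x f ≤ c₂ * P f x := by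
  obtain ⟨c₁, hc₁, R, hR, hlower⟩ := exists_lower_bound hpos
  refine ⟨c₁, hc₁, ∑ α ∈ f.support, |f.coeff α| + 1, by positivity, R, hR,
    fun x hx => ⟨hlower x hx, (eval_le_mul_P f x).trans ?_⟩⟩
  gcongr
  · exact P_nonneg f x
  · linarith

theorem stmt8 {n : ℕ} (hn : 2 ≤ n) (f : MvPolynomial (Fin n) ℝ) (hf : f.totalDegree ≠ 0)
    (hpos : ∀ Δ ∈ NewtonBoundary f, ∀ x : Fin n → ℝ, (∀ i, x i ≠ 0) →
      0 < eval x (trunc f Δ)) :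
    ∃ c₁ > (0 : ℝ), ∃ c₂ > (0 : ℝ), ∃ R > (0 : ℝ), ∀ x : Fin n → ℝ, R < ‖x‖ →
      c₁ * P f x ≤ eval x f ∧ eval x f ≤ c₂ * P f x :=
  stmt8_general f hpos
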